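/- Let G be a connected graph with chromatic number χ(G) ≥ 4. Then R_2(C(2G)) ≤ (χ(G)−1)(R_2(G)−1) + 2s(G), where C(2G) is the family of connected graphs containing two vertex-disjoint copies of G, and s(G) is the minimum size of a color class over all proper vertex colorings of G with χ(G) colors. -/

import Mathlib

/-!
Some colour `b` spans a connected graph of `K_N`. If there is no connected monochromatic `2G`,
all `b`-copies of `G` meet the vertex set `X` of one of them. Outside `X`, fewer than `χ(G)`
components of the other colour `w` contain a `w`-copy of `G`: otherwise sending the colour
classes of `G` to distinct such components gives a `b`-copy, as edges between `w`-components are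
`b`. Removing one `w`-copy from each of these components leaves at least `R₂(G)` vertices once
`N ≥ R₂(G) + χ(G)|G|`, hence a monochromatic copy of `G`; it is not `b`, and a `w`-copy shares a
`w`-component with a disjoint removed copy. Burr's bound `R₂(G) ≥ (χ - 1)(|G| - 1) + s(G)`, from
`χ - 1` blocks of `|G| - 1` vertices and one of `s(G) - 1` vertices, turns `R₂(G) + χ(G)|G|` into
the claimed bound when `χ ≥ 4`.
-/

open SimpleGraph

/-- A rainbow path on `ℓ` vertices in an edge coloring `c` of the complete graph on `Fin n`:
an injective sequence of `ℓ` vertices whose `ℓ - 1` consecutive edges get pairwise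
distinct colors. -/
def hasRainbowPath (ℓ : ℕ) {n : ℕ} {α : Type*} (c : Sym2 (Fin n) → α) : Prop :=
  ∃ f : Fin ℓ ↪ Fin n, Function.Injective (fun i : Fin (ℓ - 1) =>
    c s(f ⟨i.1, by have := i.2; omega⟩, f ⟨i.1 + 1, by have := i.2; omega⟩))

/-- A copy of the graph `H` all of whose edges receive the color `i`. -/
def hasCopyInColor {V : Type*} (H : SimpleGraph V) {n : ℕ} {α : Type*}
    (c : Sym2 (Fin n) → α) (i : α) : Prop :=
  ∃ f : V ↪ Fin n, ∀ u v, H.Adj u v → c s(f u, f v) = i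

/-- A monochromatic copy of the graph `H`. -/
def hasMonoCopy {V : Type*} (H : SimpleGraph V) {n : ℕ} {α : Type*}
    (c : Sym2 (Fin n) → α) : Prop :=
  ∃ i, hasCopyInColor H c i

/-- The graph formed by the edges of color `i`. -/
def colorGraph {n : ℕ} {α : Type*} (c : Sym2 (Fin n) → α) (i : α) : SimpleGraph (Fin n) :=
  SimpleGraph.fromEdgeSet {e | c e = i ∧ ¬ e.IsDiag}

/-- A copy, in color `i`, of some connected graph containing `H` as a subgraph:
equivalently, a copy of `H` in color `i` whose vertices all lie in a single
connected component of the graph of color-`i` edges. -/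
def hasConnCopyInColor {V : Type*} (H : SimpleGraph V) {n : ℕ} {α : Type*}
    (c : Sym2 (Fin n) → α) (i : α) : Prop :=
  ∃ f : V ↪ Fin n, (∀ u v, H.Adj u v → c s(f u, f v) = i) ∧
    ∀ u v, (colorGraph c i).Reachable (f u) (f v)

/-- A monochromatic copy of some connected graph containing `H` as a subgraph. -/
def hasMonoConnCopy {V : Type*} (H : SimpleGraph V) {n : ℕ} {α : Type*}
    (c : Sym2 (Fin n) → α) : Prop :=
  ∃ i, hasConnCopyInColor H c i

/-- The `k`-color Ramsey number `R_k(H)`. -/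
noncomputable def ramsey {V : Type*} (H : SimpleGraph V) (k : ℕ) : ℕ :=
  sInf {n | ∀ c : Sym2 (Fin n) → Fin k, hasMonoCopy H c}

/-- The asymmetric two-color Ramsey number `R(F, G)`. -/
noncomputable def ramseyPair {V W : Type*} (F : SimpleGraph V) (G : SimpleGraph W) : ℕ :=
  sInf {n | ∀ c : Sym2 (Fin n) → Fin 2, hasCopyInColor F c 0 ∨ hasCopyInColor G c 1}

/-- `R_2(𝒞(H))`, the two-color Ramsey number of the family of connected graphs
containing `H` as a subgraph. -/
noncomputable def ramseyConn {V : Type*} (H : SimpleGraph V) : ℕ :=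
  sInf {n | ∀ c : Sym2 (Fin n) → Fin 2, hasMonoConnCopy H c}

/-- `R(𝒞(F), G)`, the asymmetric Ramsey number: red member of the family of
connected graphs containing `F`, versus blue copy of `G`. -/
noncomputable def ramseyConnPair {V W : Type*} (F : SimpleGraph V) (G : SimpleGraph W) : ℕ :=
  sInf {n | ∀ c : Sym2 (Fin n) → Fin 2, hasConnCopyInColor F c 0 ∨ hasCopyInColor G c 1}

/-- The Gallai-Ramsey number `gr_k(P_ℓ : H)`: least `n` such that every `k`-coloring of
the edges of `K_n` contains a rainbow path on `ℓ` vertices or a monochromatic copy of `H`. -/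
noncomputable def gallaiRamsey (ℓ : ℕ) {V : Type*} (H : SimpleGraph V) (k : ℕ) : ℕ :=
  sInf {n | ∀ c : Sym2 (Fin n) → Fin k, hasRainbowPath ℓ c ∨ hasMonoCopy H c}

/-- `m` vertex-disjoint copies of `H`. -/
def nCopies (m : ℕ) {V : Type*} (H : SimpleGraph V) : SimpleGraph (Fin m × V) where
  Adj a b := a.1 = b.1 ∧ H.Adj a.2 b.2
  symm := ⟨by rintro a b ⟨h1, h2⟩; exact ⟨h1.symm, h2.symm⟩⟩
  loopless := ⟨by rintro a ⟨-, h⟩; exact H.irrefl h⟩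

/-- `s(G)` with respect to `r` colors: the minimum size of a color class over all
proper vertex colorings of `G` with `r` colors. -/
noncomputable def minClass {V : Type*} (G : SimpleGraph V) (r : ℕ) : ℕ :=
  sInf {n | ∃ (C : G.Coloring (Fin r)) (i : Fin r), n = Nat.card {v : V | C v = i}}

open Finset

lemma Fin.two_eq_or_eq_of_ne {b w : Fin 2} (hbw : b ≠ w) (i : Fin 2) : i = b ∨ i = w := by
  revert b w i; decide

lemma SimpleGraph.Preconnected.apply_eq_of_forall_adj {V β : Type*} {G : SimpleGraph V}
    (hG : G.Preconnected) {φ : V → β} (hφ : ∀ u v, G.Adj u v → φ u = φ v) (u v : V) :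
    φ u = φ v :=
  (hG u v).elim fun p => by
    induction p with
    | nil => rfl
    | cons h _ ih => exact (hφ _ _ h).trans ih

theorem SimpleGraph.exists_isNClique_or_isNClique_compl (p q : ℕ) :
    ∃ m, ∀ {α : Type*} (H : SimpleGraph α) (T : Finset α), m ≤ #T →
      ∃ S ⊆ T, H.IsNClique p S ∨ Hᶜ.IsNClique q S := by
  induction p generalizing q with
  | zero => exact ⟨0, fun H T _ => ⟨∅, empty_subset _, .inl (by simp)⟩⟩
  | succ p ihp =>
    induction q with
    | zero => exact ⟨0, fun H T _ => ⟨∅, empty_subset _, .inr (by simp)⟩⟩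
    | succ q ihq =>
      obtain ⟨m₁, hm₁⟩ := ihp (q + 1)
      obtain ⟨m₂, hm₂⟩ := ihq
      refine ⟨m₁ + m₂ + 1, fun H T hT => ?_⟩
      classical
      obtain ⟨x, hx⟩ : T.Nonempty := card_pos.1 (by omega)
      set A := (T.erase x).filter (H.Adj x)
      set B := (T.erase x).filter (Hᶜ.Adj x)
      have hAB : #A + #B = #T - 1 := by
        have hB : B = (T.erase x).filter (¬ H.Adj x ·) :=
          filter_congr fun y hy => by simp [compl_adj, (ne_of_mem_erase hy).symm]
        rw [← card_erase_of_mem hx, hB, card_filter_add_card_filter_not]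
      have hAT : A ⊆ T := (filter_subset _ _).trans (erase_subset _ _)
      have hBT : B ⊆ T := (filter_subset _ _).trans (erase_subset _ _)
      by_cases hA : m₁ ≤ #A
      · obtain ⟨S, hSA, hS | hS⟩ := hm₁ H A hA
        · refine ⟨insert x S, insert_subset hx (hSA.trans hAT), .inl ?_⟩
          exact hS.insert fun y hy => (mem_filter.1 (hSA hy)).2
        · exact ⟨S, hSA.trans hAT, .inr hS⟩
      · obtain ⟨S, hSB, hS | hS⟩ := hm₂ H B (by omega)
        · exact ⟨S, hSB.trans hBT, .inl hS⟩
        · refine ⟨insert x S, insert_subset hx (hSB.trans hBT), .inr ?_⟩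
          exact hS.insert fun y hy => (mem_filter.1 (hSB hy)).2

section Colorings

variable {V : Type*} {G : SimpleGraph V} {n : ℕ}

lemma colorGraph_adj {α : Type*} {c : Sym2 (Fin n) → α} {i : α} {x y : Fin n} :
    (colorGraph c i).Adj x y ↔ c s(x, y) = i ∧ x ≠ y := by
  simp [colorGraph]

lemma colorGraph_eq_compl {c : Sym2 (Fin n) → Fin 2} {b w : Fin 2} (hbw : b ≠ w) :
    colorGraph c b = (colorGraph c w)ᶜ := by
  ext x y
  have : c s(x, y) = b ↔ c s(x, y) ≠ w :=
    ⟨by rintro h rfl; exact hbw h.symm, (Fin.two_eq_or_eq_of_ne hbw _).resolve_right⟩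
  simp only [compl_adj, colorGraph_adj, this]
  tauto

lemma exists_connected_colorGraph [Nonempty (Fin n)] (c : Sym2 (Fin n) → Fin 2) :
    ∃ b w : Fin 2, b ≠ w ∧ (colorGraph c b).Connected := by
  rcases (colorGraph c 0).connected_or_connected_compl with h | h
  · exact ⟨0, 1, by decide, h⟩
  · exact ⟨1, 0, by decide, colorGraph_eq_compl (b := 1) (w := 0) (by decide) ▸ h⟩

def IsCopyInColor (G : SimpleGraph V) {α : Type*} (c : Sym2 (Fin n) → α) (i : α)
    (f : V ↪ Fin n) : Prop :=
  ∀ u v, G.Adj u v → c s(f u, f v) = i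

variable {α : Type*} {c : Sym2 (Fin n) → α} {i : α} {f : V ↪ Fin n}

def IsCopyInColor.toHom (hf : IsCopyInColor G c i f) : G →g colorGraph c i :=
  ⟨f, fun h => colorGraph_adj.2 ⟨hf _ _ h, f.injective.ne h.ne⟩⟩

lemma IsCopyInColor.reachable (hG : G.Preconnected) (hf : IsCopyInColor G c i f) (u v : V) :
    (colorGraph c i).Reachable (f u) (f v) :=
  (hG u v).map hf.toHom

lemma hasCopyInColor_of_isNClique [Fintype V] {S : Finset (Fin n)}
    (hS : (colorGraph c i).IsNClique (Fintype.card V) S) : hasCopyInColor G c i := by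
  let e : V ≃ S := Fintype.equivOfCardEq (by rw [Fintype.card_coe, hS.card_eq])
  refine ⟨e.toEmbedding.trans (Function.Embedding.subtype _), fun u v huv => ?_⟩
  have hne : (e u : Fin n) ≠ e v := fun h => huv.ne (e.injective (Subtype.ext h))
  exact (colorGraph_adj.1 (hS.isClique (e u).2 (e v).2 hne)).1

lemma hasConnCopyInColor_nCopies_two {f₀ f₁ : V ↪ Fin n} (h₀ : IsCopyInColor G c i f₀)
    (h₁ : IsCopyInColor G c i f₁) (hdisj : ∀ u v, f₀ u ≠ f₁ v)
    (hreach : ∀ u v, (colorGraph c i).Reachable (f₀ u) (f₁ v)) :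
    hasConnCopyInColor (nCopies 2 G) c i := by
  let F : Fin 2 × V → Fin n := fun p => if p.1 = 0 then f₀ p.2 else f₁ p.2
  have hF : Function.Injective F := by
    rintro ⟨a, u⟩ ⟨b, v⟩ h
    fin_cases a <;> fin_cases b <;> simp_all [F, (hdisj _ _).symm]
  refine ⟨⟨F, hF⟩, ?_, ?_⟩
  · rintro ⟨a, u⟩ ⟨b, v⟩ ⟨rfl, huv⟩
    fin_cases a
    exacts [h₀ u v huv, h₁ u v huv]
  · rintro ⟨a, u⟩ ⟨b, v⟩
    fin_cases a <;> fin_cases b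
    · exact (hreach u v).trans (hreach v v).symm
    · exact hreach u v
    · exact (hreach v u).symm
    · exact (hreach u u).symm.trans (hreach u v)

lemma exists_isCopyInColor_subset {m N : ℕ} (hm : ∀ c : Sym2 (Fin m) → Fin 2, hasMonoCopy G c)
    (c : Sym2 (Fin N) → Fin 2) {T : Finset (Fin N)} (hT : m ≤ #T) :
    ∃ i f, IsCopyInColor G c i f ∧ ∀ v, f v ∈ T := by
  obtain ⟨T', hT', rfl⟩ := exists_subset_card_eq hT
  let φ := (T'.orderEmbOfFin rfl).toEmbedding
  obtain ⟨i, f, hf⟩ := hm fun e => c (e.map φ)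
  exact ⟨i, f.trans φ, hf, fun v => hT' (T'.orderEmbOfFin_mem rfl _)⟩

end Colorings

section Ramsey

variable {V : Type*} [Fintype V] (G : SimpleGraph V)

lemma ramsey_set_nonempty : {n | ∀ c : Sym2 (Fin n) → Fin 2, hasMonoCopy G c}.Nonempty := by
  obtain ⟨m, hm⟩ := exists_isNClique_or_isNClique_compl (Fintype.card V) (Fintype.card V)
  refine ⟨m, fun c => ?_⟩
  obtain ⟨S, -, hS | hS⟩ := hm (colorGraph c 0) univ (by simp)
  · exact ⟨0, hasCopyInColor_of_isNClique hS⟩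
  · rw [← colorGraph_eq_compl (b := 1) (by decide)] at hS
    exact ⟨1, hasCopyInColor_of_isNClique hS⟩

lemma hasMonoCopy_ramsey (c : Sym2 (Fin (ramsey G 2)) → Fin 2) : hasMonoCopy G c :=
  Nat.sInf_mem (ramsey_set_nonempty G) c

end Ramsey

section MinClass

variable {V : Type*} {G : SimpleGraph V} {r : ℕ}

lemma minClass_le (C : G.Coloring (Fin r)) (i : Fin r) :
    minClass G r ≤ Nat.card {v | C v = i} :=
  Nat.sInf_le ⟨C, i, rfl⟩

lemma exists_minClass_eq (hC : G.Colorable r) (hr : 0 < r) :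
    ∃ (C : G.Coloring (Fin r)) (i : Fin r), minClass G r = Nat.card {v | C v = i} :=
  Nat.sInf_mem (s := {n | ∃ (C : G.Coloring (Fin r)) (i : Fin r), n = Nat.card {v | C v = i}})
    ⟨_, hC.some, ⟨0, hr⟩, rfl⟩

lemma minClass_le_card [Finite V] (hC : G.Colorable r) (hr : 0 < r) :
    minClass G r ≤ Nat.card V := by
  obtain ⟨C, i, h⟩ := exists_minClass_eq hC hr
  exact h ▸ Finite.card_subtype_le _

lemma le_card_of_chromaticNumber_eq [Fintype V] (hr : G.chromaticNumber = r) :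
    r ≤ Fintype.card V := by
  exact_mod_cast hr ▸ G.chromaticNumber_le_card

lemma minClass_pos [Finite V] (hr : G.chromaticNumber = r) (hr0 : 0 < r) : 0 < minClass G r := by
  obtain ⟨C, i, h⟩ := exists_minClass_eq (chromaticNumber_le_iff_colorable.1 hr.le) hr0
  rw [h, Nat.card_pos_iff]
  refine ⟨?_, inferInstance⟩
  by_contra! hempty
  have hmiss : ∀ v, C v ≠ i := fun v hv => hempty.false ⟨v, hv⟩
  let C' : G.Coloring {j : Fin r // j ≠ i} :=
    Coloring.mk (fun v => ⟨C v, hmiss v⟩) fun huv h => C.valid huv (congrArg Subtype.val h)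
  have := C'.colorable.chromaticNumber_le
  rw [hr, Fintype.card_subtype_compl, Fintype.card_fin, Fintype.card_unique] at this
  have : r ≤ r - 1 := by exact_mod_cast this
  omega

end MinClass

section Burr

/-- Blocks of `k` consecutive vertices of `K_M`: colour `0` inside a block, `1` between blocks. -/
def blockColoring (M k : ℕ) : Sym2 (Fin M) → Fin 2 :=
  Sym2.lift ⟨fun x y => if x.1 / k = y.1 / k then 0 else 1, fun x y => by simp only [eq_comm]⟩

lemma blockColoring_eq_zero {M k : ℕ} {x y : Fin M} :
    blockColoring M k s(x, y) = 0 ↔ x.1 / k = y.1 / k := by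
  simp [blockColoring]

lemma blockColoring_eq_one {M k : ℕ} {x y : Fin M} :
    blockColoring M k s(x, y) = 1 ↔ x.1 / k ≠ y.1 / k := by
  simp [blockColoring]

variable {V : Type*} {G : SimpleGraph V} {M k : ℕ} {f : V ↪ Fin M}

lemma card_le_of_isCopyInColor_blockColoring_zero [Fintype V] (hG : G.Preconnected) (hk : 0 < k)
    (hf : IsCopyInColor G (blockColoring M k) 0 f) : Fintype.card V ≤ k := by
  have hblock := hG.apply_eq_of_forall_adj (φ := fun v => (f v).1 / k)
    fun u v huv => blockColoring_eq_zero.1 (hf u v huv)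
  have hinj : Function.Injective fun v => (⟨(f v).1 % k, Nat.mod_lt _ hk⟩ : Fin k) := by
    intro u v h
    have := Nat.div_add_mod (f u) k
    have := Nat.div_add_mod (f v) k
    have := hblock u v
    exact f.injective (Fin.ext (by simp_all))
  simpa using Fintype.card_le_of_injective _ hinj

lemma minClass_le_of_isCopyInColor_blockColoring_one {r t : ℕ} {f : V ↪ Fin ((r - 1) * k + t)}
    (hr : 0 < r) (ht : t ≤ k) (hf : IsCopyInColor G (blockColoring _ k) 1 f) :
    minClass G r ≤ t := by
  have hlt : ∀ v, (f v).1 / k < r := fun v => by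
    have := (f v).2
    have : (r - 1) * k + k = k * r := by
      rw [← Nat.succ_mul, Nat.succ_eq_add_one, Nat.sub_add_cancel hr, mul_comm]
    exact Nat.div_lt_of_lt_mul (by omega)
  let C : G.Coloring (Fin r) := Coloring.mk (fun v => ⟨(f v).1 / k, hlt v⟩)
    fun huv h => blockColoring_eq_one.1 (hf _ _ huv) (Fin.val_eq_of_eq h)
  let j : Fin r := ⟨r - 1, by omega⟩
  -- in the last block the remainder is the offset from `(r - 1) * k`, which is `< t`
  have hmod : ∀ v : {v | C v = j}, (f v).1 % k < t := fun ⟨v, hv⟩ => by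
    have hq : (f v).1 / k = r - 1 := Fin.val_eq_of_eq hv
    have := Nat.div_add_mod (f v) k
    have := (f v).2
    rw [hq] at *
    nlinarith
  have hinj : Function.Injective fun v : {v | C v = j} => (⟨(f v).1 % k, hmod v⟩ : Fin t) := by
    rintro ⟨u, hu⟩ ⟨v, hv⟩ h
    have := Nat.div_add_mod (f u) k
    have := Nat.div_add_mod (f v) k
    have : (f u).1 / k = (f v).1 / k := congrArg Fin.val (hu.trans hv.symm)
    exact Subtype.ext (f.injective (Fin.ext (by simp_all)))
  calc minClass G r ≤ _ := minClass_le C j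
    _ ≤ Nat.card (Fin t) := Nat.card_le_card_of_injective _ hinj
    _ = t := Nat.card_fin t

theorem burr_le_ramsey [Fintype V] (hG : G.Connected) {r : ℕ} (hr : G.chromaticNumber = r)
    (hr2 : 2 ≤ r) : (r - 1) * (Fintype.card V - 1) + minClass G r ≤ ramsey G 2 := by
  have hC : G.Colorable r := chromaticNumber_le_iff_colorable.1 hr.le
  have hs := minClass_pos hr (by omega)
  have hsg := minClass_le_card hC (by omega)
  have hrg := le_card_of_chromaticNumber_eq hr
  rw [Nat.card_eq_fintype_card] at hsg
  refine le_csInf (ramsey_set_nonempty G) fun m hm => ?_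
  by_contra! hlt
  obtain ⟨i, f, hf, -⟩ := exists_isCopyInColor_subset hm
    (blockColoring ((r - 1) * (Fintype.card V - 1) + (minClass G r - 1)) (Fintype.card V - 1))
    (T := univ) (by simp; omega)
  fin_cases i
  · have := card_le_of_isCopyInColor_blockColoring_zero hG.preconnected (by omega) hf
    omega
  · have := minClass_le_of_isCopyInColor_blockColoring_one (by omega) (by omega) hf
    omega

end Burr

section TwoCopies

variable {V : Type*} {G : SimpleGraph V} {N : ℕ} {c : Sym2 (Fin N) → Fin 2} {b w : Fin 2}

/-- Edges between distinct components of the `w`-graph have the other colour `b`. -/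
lemma exists_isCopyInColor_of_components {α : Type*} (C : G.Coloring α) (hbw : b ≠ w)
    (F : α → V ↪ Fin N) (K : α → (colorGraph c w).ConnectedComponent) (hK : Function.Injective K)
    (hFK : ∀ j v, (colorGraph c w).connectedComponentMk (F j v) = K j) :
    ∃ f : V ↪ Fin N, IsCopyInColor G c b f ∧ ∀ v, f v = F (C v) v := by
  have hsep : ∀ u v, C u ≠ C v → (colorGraph c w).connectedComponentMk (F (C u) u) ≠
      (colorGraph c w).connectedComponentMk (F (C v) v) := by
    intro u v h
    rw [hFK, hFK]
    exact hK.ne h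
  have hinj : Function.Injective fun v => F (C v) v := by
    intro u v h
    by_cases hC : C u = C v
    · simp only [hC] at h
      exact (F _).injective h
    · exact absurd (congrArg _ h) (hsep u v hC)
  refine ⟨⟨_, hinj⟩, fun u v huv => ?_, fun v => rfl⟩
  have hne := hsep u v (C.valid huv)
  have : (colorGraph c b).Adj (F (C u) u) (F (C v) v) := by
    rw [colorGraph_eq_compl hbw, compl_adj]
    exact ⟨fun h => hne (congrArg _ h), fun h => hne (ConnectedComponent.sound h.reachable)⟩
  exact (colorGraph_adj.1 this).1

lemma exists_finset_meets_isCopyInColor [Fintype V] (hb : (colorGraph c b).Connected)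
    (hno : ¬ hasConnCopyInColor (nCopies 2 G) c b) :
    ∃ X : Finset (Fin N), #X ≤ Fintype.card V ∧ ∀ f, IsCopyInColor G c b f → ∃ v, f v ∈ X := by
  classical
  by_cases h : ∃ f, IsCopyInColor G c b f
  · obtain ⟨f₀, hf₀⟩ := h
    refine ⟨univ.map f₀, by simp, fun f hf => ?_⟩
    by_contra! hdisj
    exact hno (hasConnCopyInColor_nCopies_two hf₀ hf (fun u v h => hdisj v (by simp [← h]))
      fun _ _ => hb.preconnected _ _)
  · exact ⟨∅, by simp, fun f hf => absurd ⟨f, hf⟩ h⟩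

/-- `Y` collects one `w`-copy inside `A` from each `w`-component containing one; there are fewer
than `r` such components, or `exists_isCopyInColor_of_components` would give a `b`-copy in `A`. -/
lemma exists_finset_forall_isCopyInColor_sdiff [Fintype V] (hG : G.Connected) {r : ℕ}
    (hC : G.Colorable r) (hbw : b ≠ w) (A : Finset (Fin N))
    (hA : ∀ f, IsCopyInColor G c b f → ∃ v, f v ∉ A) :
    ∃ Y : Finset (Fin N), #Y ≤ (r - 1) * Fintype.card V ∧ ∀ f, IsCopyInColor G c w f →
      (∀ v, f v ∈ A \ Y) → hasConnCopyInColor (nCopies 2 G) c w := by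
  classical
  let κ := (colorGraph c w).connectedComponentMk
  let T := univ.filter fun E => ∃ f, IsCopyInColor G c w f ∧ ∀ v, f v ∈ A ∧ κ (f v) = E
  have : ∀ E : T, ∃ f, IsCopyInColor G c w f ∧ ∀ v, f v ∈ A ∧ κ (f v) = E :=
    fun E => (mem_filter.1 E.2).2
  choose F hF using this
  have hT : #T < r := by
    by_contra! h
    let e : Fin r ↪ T := (Fin.castLEEmb h).trans T.equivFin.symm.toEmbedding
    obtain ⟨f, hf, hfF⟩ := exists_isCopyInColor_of_components (c := c) hC.some hbw
      (fun j => F (e j)) (fun j => e j) (Subtype.val_injective.comp e.injective)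
      fun j v => ((hF (e j)).2 v).2
    obtain ⟨v, hv⟩ := hA f hf
    exact hv (hfF v ▸ ((hF _).2 v).1)
  refine ⟨univ.biUnion fun E : T => univ.map (F E), ?_, fun f hf hfAY => ?_⟩
  · calc _ ≤ #(univ : Finset T) * Fintype.card V :=
          card_biUnion_le_card_mul _ _ _ fun E _ => by simp
      _ ≤ (r - 1) * Fintype.card V := by gcongr; simp; omega
  obtain ⟨v₀⟩ := hG.nonempty
  have hκ : ∀ v, κ (f v) = κ (f v₀) := fun v =>
    ConnectedComponent.sound (hf.reachable hG.preconnected v v₀)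
  let E : T :=
    ⟨κ (f v₀), mem_filter.2 ⟨mem_univ _, f, hf, fun v => ⟨(mem_sdiff.1 (hfAY v)).1, hκ v⟩⟩⟩
  refine hasConnCopyInColor_nCopies_two (hF E).1 hf (fun u v h => ?_)
    fun u v => ConnectedComponent.exact ?_
  · exact (mem_sdiff.1 (hfAY v)).2 (mem_biUnion.2 ⟨E, mem_univ _, by simp [← h]⟩)
  · exact ((hF E).2 u).2.trans (hκ v).symm

lemma hasMonoConnCopy_nCopies_two [Fintype V] (hG : G.Connected) {r : ℕ} (hC : G.Colorable r)
    (hN : ramsey G 2 + r * Fintype.card V ≤ N) (c : Sym2 (Fin N) → Fin 2) :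
    hasMonoConnCopy (nCopies 2 G) c := by
  classical
  obtain ⟨v₀⟩ := hG.nonempty
  have hr : 0 < r := (hC.some v₀).pos
  have hg : 0 < Fintype.card V := Fintype.card_pos_iff.2 ⟨v₀⟩
  have : Nonempty (Fin N) := ⟨⟨0, by nlinarith⟩⟩
  obtain ⟨b, w, hbw, hb⟩ := exists_connected_colorGraph c
  by_contra hno
  have hno' : ∀ i, ¬ hasConnCopyInColor (nCopies 2 G) c i := fun i h => hno ⟨i, h⟩
  obtain ⟨X, hX, hXmeet⟩ := exists_finset_meets_isCopyInColor hb (hno' b)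
  obtain ⟨Y, hY, hYw⟩ := exists_finset_forall_isCopyInColor_sdiff hG hC hbw (univ \ X)
    fun f hf => (hXmeet f hf).imp fun v hv h => (mem_sdiff.1 h).2 hv
  have hZ : ramsey G 2 ≤ #((univ \ X) \ Y) := by
    have := le_card_sdiff Y (univ \ X)
    have := le_card_sdiff X univ
    have : (r - 1) * Fintype.card V + Fintype.card V = r * Fintype.card V := by
      rw [← Nat.succ_mul, Nat.succ_eq_add_one, Nat.sub_add_cancel hr]
    simp only [card_univ, Fintype.card_fin] at *
    omega
  obtain ⟨i, f, hf, hfZ⟩ := exists_isCopyInColor_subset (hasMonoCopy_ramsey G) c hZ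
  rcases Fin.two_eq_or_eq_of_ne hbw i with rfl | rfl
  · obtain ⟨v, hv⟩ := hXmeet f hf
    exact (mem_sdiff.1 (mem_sdiff.1 (hfZ v)).1).2 hv
  · exact hno' i (hYw f hf hfZ)

end TwoCopies

/-- For a connected graph `G` with `χ(G) = r ≥ 4`,
`R₂(𝒞(2G)) ≤ (r−1)(R₂(G)−1) + 2s(G)`. -/
theorem stmt15 {V : Type*} [Fintype V] (G : SimpleGraph V) (hconn : G.Connected)
    (r : ℕ) (hr : G.chromaticNumber = (r : ℕ∞)) (hr4 : 4 ≤ r) :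
    ramseyConn (nCopies 2 G) ≤ (r - 1) * (ramsey G 2 - 1) + 2 * minClass G r := by
  have hC : G.Colorable r := chromaticNumber_le_iff_colorable.1 hr.le
  have hburr := burr_le_ramsey hconn hr (by omega)
  have hs := minClass_pos hr (by omega)
  have hrg := le_card_of_chromaticNumber_eq hr
  calc ramseyConn (nCopies 2 G) ≤ ramsey G 2 + r * Fintype.card V :=
        Nat.sInf_le (hasMonoConnCopy_nCopies_two hconn hC le_rfl)
    _ ≤ (r - 1) * (ramsey G 2 - 1) + 2 * minClass G r := by
      zify [show 1 ≤ r by omega, show 1 ≤ Fintype.card V by omega,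
        show 1 ≤ ramsey G 2 by omega] at hburr ⊢
      nlinarith
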